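/- The geometric entanglement of the state |K_3^3⟩ across any bipartition of the three qubits is 1/4; equivalently, the maximal squared overlap of |K_3^3⟩ with any state that is a product across the bipartition {1,2}|{3} equals 3/4. -/

import Mathlib

/-!
Write `P = φ₀₀ + φ₀₁ + φ₁₀` and `Q = φ₁₁`. Up to conjugation the overlap of `φ ⊗ χ` with
`|K_3^3⟩` is `(χ₀ (P + Q) + χ₁ (P - Q)) / √8`. Cauchy–Schwarz in `χ` and the parallelogram law
bound its square by `(|P|² + |Q|²) / 4`, and Cauchy–Schwarz on the three entries of `P` gives
`|P|² ≤ 3 (1 - |Q|²)`, so the overlap is at most `3/4`. Equality holds for `Q = 0`, `φ` uniform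
on the other three entries and `χ` uniform.
-/

abbrev QState (n : ℕ) := (Fin n → Bool) → ℂ

noncomputable def plusState (n : ℕ) : QState n := fun _ => ((1 / Real.sqrt (2 ^ n) : ℝ) : ℂ)

def CZgate {n : ℕ} (e : Finset (Fin n)) (ψ : QState n) : QState n :=
  fun x => (if ∀ i ∈ e, x i = true then (-1 : ℂ) else 1) * ψ x

/-- `|K_3^3⟩ = CCZ |+++⟩ = (1/√8) Σ_x (-1)^{x₁x₂x₃} |x⟩`. -/
noncomputable def K33 : QState 3 := CZgate Finset.univ (plusState 3)

open Complex ComplexConjugate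

lemma Fintype.sum_fin_three_arrow {α M : Type*} [Fintype α] [AddCommMonoid M]
    (f : (Fin 3 → α) → M) : ∑ x, f x = ∑ a, ∑ b, ∑ c, f ![a, b, c] := by
  have hbij : Function.Bijective fun p : α × α × α => ![p.1, p.2.1, p.2.2] := by
    refine ⟨fun p q h => ?_, fun x => ⟨(x 0, x 1, x 2), ?_⟩⟩
    · have h0 := congrFun h 0
      have h1 := congrFun h 1
      have h2 := congrFun h 2
      simp_all [Prod.ext_iff]
    · ext i
      fin_cases i <;> rfl
  rw [← Fintype.sum_bijective _ hbij (fun p => f ![p.1, p.2.1, p.2.2]) f fun _ => rfl]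
  simp only [Fintype.sum_prod_type]

lemma Complex.normSq_sum_mul_le {ι : Type*} (s : Finset ι) (f g : ι → ℂ) :
    normSq (∑ i ∈ s, f i * g i) ≤ (∑ i ∈ s, normSq (f i)) * ∑ i ∈ s, normSq (g i) := by
  simp only [normSq_eq_norm_sq]
  calc ‖∑ i ∈ s, f i * g i‖ ^ 2 ≤ (∑ i ∈ s, ‖f i‖ * ‖g i‖) ^ 2 := by
        gcongr
        exact (norm_sum_le _ _).trans_eq (by simp only [norm_mul])
    _ ≤ _ := Finset.sum_mul_sq_le_sq_mul_sq s _ _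

lemma K33_cons (a b c : Bool) :
    K33 ![a, b, c] = (if a && b && c then -1 else 1) * ((√8)⁻¹ : ℝ) := by
  cases a <;> cases b <;> cases c <;>
    norm_num [K33, CZgate, plusState, Fin.forall_fin_succ]

lemma sum_conj_prod_mul_K33 (φ : Bool → Bool → ℂ) (χ : Bool → ℂ) :
    ∑ x : Fin 3 → Bool, conj (φ (x 0) (x 1) * χ (x 2)) * K33 x =
      conj (((√8)⁻¹ : ℝ) * (χ false * (φ false false + φ false true + φ true false + φ true true)
        + χ true * (φ false false + φ false true + φ true false - φ true true))) := by
  simp only [Fintype.sum_fin_three_arrow, K33_cons, Fintype.sum_bool, Matrix.cons_val_zero,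
    Matrix.cons_val_one, Matrix.cons_val_two, Matrix.head_cons, Matrix.tail_cons,
    Bool.and_false, Bool.and_true, Bool.false_eq_true, ↓reduceIte, map_mul, map_add, map_sub,
    map_inv₀, conj_ofReal, ofReal_inv, neg_mul, one_mul, mul_neg]
  ring

lemma Complex.normSq_add_add_normSq_sub (z w : ℂ) :
    normSq (z + w) + normSq (z - w) = 2 * (normSq z + normSq w) := by
  simpa only [normSq_eq_norm_sq] using parallelogram_law_with_norm ℂ z w

lemma Complex.normSq_add_add_le (a b c : ℂ) :
    normSq (a + b + c) ≤ 3 * (normSq a + normSq b + normSq c) := by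
  simpa [Fin.sum_univ_three, add_assoc, mul_comm] using normSq_sum_mul_le Finset.univ ![a, b, c] 1

lemma normSq_sum_conj_prod_mul_K33_le (φ : Bool → Bool → ℂ) (χ : Bool → ℂ)
    (hφ : ∑ a, ∑ b, normSq (φ a b) = 1) (hχ : ∑ c, normSq (χ c) = 1) :
    normSq (∑ x : Fin 3 → Bool, conj (φ (x 0) (x 1) * χ (x 2)) * K33 x) ≤ 3 / 4 := by
  have hP := normSq_add_add_le (φ false false) (φ false true) (φ true false)
  set P := φ false false + φ false true + φ true false
  set Q := φ true true
  have hcs := normSq_sum_mul_le Finset.univ χ fun c => bif c then P - Q else P + Q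
  simp only [Fintype.sum_bool, cond_true, cond_false, hχ, one_mul] at hcs
  simp only [Fintype.sum_bool] at hφ
  have h8 : normSq ((√8)⁻¹ : ℝ) = 1 / 8 := by
    rw [normSq_ofReal, ← mul_inv, Real.mul_self_sqrt (by norm_num)]; norm_num
  rw [sum_conj_prod_mul_K33, normSq_conj, normSq_mul, h8]
  calc 1 / 8 * normSq (χ false * (P + Q) + χ true * (P - Q))
      ≤ 1 / 8 * (2 * (normSq P + normSq Q)) := by
        rw [← normSq_add_add_normSq_sub, add_comm (χ false * _)]; linarith
    _ ≤ 3 / 4 := by nlinarith [normSq_nonneg Q]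

lemma exists_normSq_sum_conj_prod_mul_K33_eq : ∃ (φ : Bool → Bool → ℂ) (χ : Bool → ℂ),
    ∑ a, ∑ b, normSq (φ a b) = 1 ∧ ∑ c, normSq (χ c) = 1 ∧
      normSq (∑ x : Fin 3 → Bool, conj (φ (x 0) (x 1) * χ (x 2)) * K33 x) = 3 / 4 := by
  let φ : Bool → Bool → ℂ := fun a b => if a && b then 0 else ((√3)⁻¹ : ℝ)
  let χ : Bool → ℂ := fun _ => ((√2)⁻¹ : ℝ)
  refine ⟨φ, χ, ?_, ?_, ?_⟩
  · norm_num [φ]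
  · simp [χ]
  · rw [sum_conj_prod_mul_K33, normSq_conj]
    simp only [ofReal_inv, Bool.and_eq_true, Bool.false_eq_true, and_self, ↓reduceIte, and_true,
      and_false, add_zero, sub_zero, map_mul, map_inv₀, normSq_ofReal, Nat.ofNat_nonneg,
      Real.mul_self_sqrt, χ, φ]
    norm_cast
    rw [normSq_ofReal]
    field_simp
    norm_num

/-- the maximal squared overlap of `|K_3^3⟩` with states that are
product across the bipartition `{1,2}|{3}` equals `3/4`; hence the geometric
entanglement across this bipartition is `1 - 3/4 = 1/4`. -/
theorem stmt6 :
    IsGreatest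
      {r : ℝ | ∃ (φ : Bool → Bool → ℂ) (χ : Bool → ℂ),
        (∑ a : Bool, ∑ b : Bool, Complex.normSq (φ a b)) = 1 ∧
        (∑ c : Bool, Complex.normSq (χ c)) = 1 ∧
        r = Complex.normSq
          (∑ x : Fin 3 → Bool, (starRingEnd ℂ) (φ (x 0) (x 1) * χ (x 2)) * K33 x)}
      (3 / 4)
    ∧ (1 : ℝ) - 3 / 4 = 1 / 4 := by
  refine ⟨⟨?_, ?_⟩, by norm_num⟩
  · obtain ⟨φ, χ, hφ, hχ, h⟩ := exists_normSq_sum_conj_prod_mul_K33_eq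
    exact ⟨φ, χ, hφ, hχ, h.symm⟩
  · rintro r ⟨φ, χ, hφ, hχ, rfl⟩
    exact normSq_sum_conj_prod_mul_K33_le φ χ hφ hχ
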